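/- arXiv:2010.02398 — 7 statements merged into one kernel-verified Lean document; each statement's English description precedes it below -/
import Mathlib

section
/- In the edge-removal setup, for every path r in S^c (a path not passing through node i), the post-removal choice probability is strictly smaller than the pre-removal choice probability, i.e. P̄_r < P_r, if and only if κ > log(P(S)/P(S_a)) / log(m/(m-1)). (Proposition 1: removing an edge a at node i decreases the probability of every path not passing through i exactly when the choice aversion parameter κ at node i exceeds this threshold.) -/
open Real Finset

/-!
Write `W(X) = ∑ r ∈ X, exp (U r)`. Removing the edge rescales the weight `exp U` of every
surviving path through `i` by `exp (-Δ) = (m / (m - 1)) ^ κ` and deletes the other paths through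
`i`, while the weights of the paths in `Sᶜ` are unchanged. Hence each `r ∈ Sᶜ` loses probability exactly when the new
normalising constant `exp (-Δ) · W(Sa) + W(Sᶜ)` exceeds the old one `W(S) + W(Sᶜ)`, that is,
when `W(S) / W(Sa) = P(S) / P(Sa) < (m / (m - 1)) ^ κ`; taking logarithms gives the threshold.
-/

theorem sum_exp_union_of_shift {ι : Type*} [DecidableEq ι] {s t : Finset ι}
    (hst : Disjoint s t) {U V : ι → ℝ} {Δ : ℝ}
    (hs : ∀ i ∈ s, V i = U i - Δ) (ht : ∀ i ∈ t, V i = U i) :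
    ∑ i ∈ s ∪ t, exp (V i) = exp (-Δ) * ∑ i ∈ s, exp (U i) + ∑ i ∈ t, exp (U i) := by
  rw [sum_union hst, mul_sum]
  congr 1
  · refine sum_congr rfl fun i hi => ?_
    rw [hs i hi, sub_eq_neg_add, exp_add]
  · exact sum_congr rfl fun i hi => by rw [ht i hi]

theorem sum_div_div_sum_div {ι : Type*} (s t : Finset ι) (f : ι → ℝ) {c : ℝ} (hc : c ≠ 0) :
    (∑ i ∈ s, f i / c) / ∑ i ∈ t, f i / c = (∑ i ∈ s, f i) / ∑ i ∈ t, f i := by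
  rw [← sum_div, ← sum_div, div_div_div_cancel_right₀ hc]

theorem log_div_sub_one_pos {m : ℝ} (hm : 1 < m) : 0 < log (m / (m - 1)) :=
  log_pos <| (one_lt_div (by linarith)).mpr (by linarith)

theorem log_sub_one_sub_log {m : ℝ} (hm : 1 < m) :
    log (m - 1) - log m = -log (m / (m - 1)) := by
  rw [log_div (by positivity) (by linarith)]
  ring

theorem log_div_div_lt_iff {A B L κ : ℝ} (hA : 0 < A) (hB : 0 < B) (hL : 0 < L) :
    log (B / A) / L < κ ↔ B < exp (κ * L) * A := by
  rw [div_lt_iff₀ hL, log_lt_iff_lt_exp (div_pos hB hA), div_lt_iff₀ hA]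

theorem regularity_failure_characterization_general
    {R : Type*} [Fintype R] [DecidableEq R]
    (U : R → ℝ) (S Sa : Finset R)
    (hSaS : Sa ⊆ S) (hSa : Sa.Nonempty)
    (m : ℕ) (hm : 2 ≤ m) (κ : ℝ)
    (P : R → ℝ)
    (hP : ∀ r, P r = Real.exp (U r) / ∑ r' : R, Real.exp (U r'))
    (Δ : ℝ) (hΔ : Δ = κ * (Real.log ((m : ℝ) - 1) - Real.log (m : ℝ)))
    (Ubar : R → ℝ)
    (hUbar₁ : ∀ r ∈ Sa, Ubar r = U r - Δ)
    (hUbar₂ : ∀ r ∈ Sᶜ, Ubar r = U r)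
    (Pbar : R → ℝ)
    (hPbar : ∀ r ∈ Sa ∪ Sᶜ,
      Pbar r = Real.exp (Ubar r) / ∑ r' ∈ Sa ∪ Sᶜ, Real.exp (Ubar r')) :
    ∀ r ∈ Sᶜ,
      (Pbar r < P r ↔
        κ > Real.log ((∑ r' ∈ S, P r') / (∑ r' ∈ Sa, P r')) /
              Real.log ((m : ℝ) / ((m : ℝ) - 1))) := by
  intro r hr
  obtain rfl : P = fun r => exp (U r) / ∑ r' : R, exp (U r') := funext hP
  have hm₁ : (1 : ℝ) < m := by exact_mod_cast hm
  set A := ∑ r' ∈ Sa, exp (U r')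
  set B := ∑ r' ∈ S, exp (U r')
  set C := ∑ r' ∈ Sᶜ, exp (U r')
  have hA : 0 < A := sum_pos (fun _ _ => exp_pos _) hSa
  have hB : 0 < B :=
    hA.trans_le (sum_le_sum_of_subset_of_nonneg hSaS fun _ _ _ => (exp_pos _).le)
  have hZ : ∑ r' : R, exp (U r') = B + C := (sum_add_sum_compl S _).symm
  have hZbar : ∑ r' ∈ Sa ∪ Sᶜ, exp (Ubar r') = exp (κ * log (m / (m - 1))) * A + C := by
    rw [sum_exp_union_of_shift (disjoint_compl_right.mono_left hSaS) hUbar₁ hUbar₂, hΔ,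
      log_sub_one_sub_log hm₁, mul_neg, neg_neg]
  rw [hPbar r (mem_union_right _ hr), hUbar₂ r hr, hZbar, hZ,
    div_lt_div_iff_of_pos_left (exp_pos _) (by positivity) (by positivity),
    add_lt_add_iff_right, sum_div_div_sum_div _ _ _ (by positivity), gt_iff_lt,
    log_div_div_lt_iff hA hB (log_div_sub_one_pos hm₁)]

/-- **Proposition 1** (failure of regularity).  In the edge-removal setup,
for every path `r ∈ Sᶜ` (not passing through node `i`), the post-removal
logit probability is strictly smaller than the pre-removal one iff
`κ > log(P(S)/P(Sa)) / log(m/(m-1))`. -/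
theorem regularity_failure_characterization
    {R : Type*} [Fintype R] [DecidableEq R]
    (U : R → ℝ) (S Sa : Finset R)
    (hS : S.Nonempty) (hSc : Sᶜ.Nonempty)
    (hSaS : Sa ⊆ S) (hSa : Sa.Nonempty)
    (m : ℕ) (hm : 2 ≤ m) (κ : ℝ) (hκ : 0 ≤ κ)
    (P : R → ℝ)
    (hP : ∀ r, P r = Real.exp (U r) / ∑ r' : R, Real.exp (U r'))
    (Δ : ℝ) (hΔ : Δ = κ * (Real.log ((m : ℝ) - 1) - Real.log (m : ℝ)))
    (Ubar : R → ℝ)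
    (hUbar₁ : ∀ r ∈ Sa, Ubar r = U r - Δ)
    (hUbar₂ : ∀ r ∈ Sᶜ, Ubar r = U r)
    (Pbar : R → ℝ)
    (hPbar : ∀ r ∈ Sa ∪ Sᶜ,
      Pbar r = Real.exp (Ubar r) / ∑ r' ∈ Sa ∪ Sᶜ, Real.exp (Ubar r')) :
    ∀ r ∈ Sᶜ,
      (Pbar r < P r ↔
        κ > Real.log ((∑ r' ∈ S, P r') / (∑ r' ∈ Sa, P r')) /
              Real.log ((m : ℝ) / ((m : ℝ) - 1))) :=
  regularity_failure_characterization_general U S Sa hSaS hSa m hm κ P hP Δ hΔ Ubar hUbar₁ hUbar₂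
    Pbar hPbar
end

section
/- In the edge-removal setup, if either S_a is a proper subset of S, or κ > 0 and S^c is nonempty, then for every surviving path r ∈ S_a through node i the post-removal probability strictly increases: P̄_r > P_r. (Removing an edge at node i always makes the surviving paths through i strictly more likely under choice aversion.) -/
/-!
Shifting all utilities by a constant leaves logit probabilities unchanged, shrinking the
choice set and lowering the competitors' utilities can only raise them. Since `Δ ≤ 0`, the
post-removal utilities on `S_a ∪ Sᶜ` are bounded by `U - Δ`, with equality at the paths of
`S_a`; so `P̄_r ≥ P_r`. The inequality is strict because of the removed paths of `S \ S_a` in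
the first case, and because the paths of `Sᶜ` are not shifted (`Δ < 0`) in the second.
-/

open Real Finset

namespace Logit

variable {ι : Type*}

noncomputable def prob (T : Finset ι) (U : ι → ℝ) (r : ι) : ℝ :=
  exp (U r) / ∑ x ∈ T, exp (U x)

theorem prob_sub_const (T : Finset ι) (U : ι → ℝ) (c : ℝ) (r : ι) :
    prob T (fun x => U x - c) r = prob T U r := by
  simp only [prob, exp_sub, ← sum_div]
  exact div_div_div_cancel_right₀ (exp_pos c).ne' _ _

theorem prob_le_of_subset {T T' : Finset ι} (U : ι → ℝ) {r : ι} (hT : T' ⊆ T) (hr : r ∈ T') :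
    prob T U r ≤ prob T' U r :=
  div_le_div_of_nonneg_left (exp_pos _).le (sum_pos (fun _ _ => exp_pos _) ⟨r, hr⟩)
    (sum_le_sum_of_subset_of_nonneg hT fun _ _ _ => (exp_pos _).le)

theorem prob_lt_of_ssubset {T T' : Finset ι} (U : ι → ℝ) {r : ι} (hT : T' ⊂ T) (hr : r ∈ T') :
    prob T U r < prob T' U r := by
  obtain ⟨x, hxT, hxT'⟩ := exists_of_ssubset hT
  exact div_lt_div_of_pos_left (exp_pos _) (sum_pos (fun _ _ => exp_pos _) ⟨r, hr⟩)
    (sum_lt_sum_of_subset hT.subset hxT hxT' (exp_pos _)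
      fun _ _ _ => (exp_pos _).le)

theorem prob_le_of_le {T : Finset ι} {V W : ι → ℝ} {r : ι} (hr : r ∈ T)
    (hle : ∀ x ∈ T, V x ≤ W x) (heq : V r = W r) :
    prob T W r ≤ prob T V r := by
  rw [prob, prob, heq]
  exact div_le_div_of_nonneg_left (exp_pos _).le (sum_pos (fun _ _ => exp_pos _) ⟨r, hr⟩)
    (sum_le_sum fun x hx => exp_le_exp.2 (hle x hx))

theorem prob_lt_of_le_of_lt {T : Finset ι} {V W : ι → ℝ} {r : ι} (hr : r ∈ T)
    (hle : ∀ x ∈ T, V x ≤ W x) (hlt : ∃ x ∈ T, V x < W x) (heq : V r = W r) :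
    prob T W r < prob T V r := by
  rw [prob, prob, heq]
  exact div_lt_div_of_pos_left (exp_pos _) (sum_pos (fun _ _ => exp_pos _) ⟨r, hr⟩)
    (sum_lt_sum (fun x hx => exp_le_exp.2 (hle x hx))
      (hlt.imp fun _ ⟨hx, h⟩ => ⟨hx, exp_lt_exp.2 h⟩))

end Logit

open Logit in
theorem surviving_paths_prob_increases_general
    {R : Type*} [Fintype R] [DecidableEq R]
    (U : R → ℝ) (S Sa : Finset R)
    (m : ℕ) (hm : 2 ≤ m) (κ : ℝ) (hκ : 0 ≤ κ)
    (P : R → ℝ)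
    (hP : ∀ r, P r = Real.exp (U r) / ∑ r' : R, Real.exp (U r'))
    (Δ : ℝ) (hΔ : Δ = κ * (Real.log ((m : ℝ) - 1) - Real.log (m : ℝ)))
    (Ubar : R → ℝ)
    (hUbar₁ : ∀ r ∈ Sa, Ubar r = U r - Δ)
    (hUbar₂ : ∀ r ∈ Sᶜ, Ubar r = U r)
    (Pbar : R → ℝ)
    (hPbar : ∀ r ∈ Sa ∪ Sᶜ,
      Pbar r = Real.exp (Ubar r) / ∑ r' ∈ Sa ∪ Sᶜ, Real.exp (Ubar r'))
    (hcase : Sa ⊂ S ∨ (0 < κ ∧ Sᶜ.Nonempty)) :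
    ∀ r ∈ Sa, P r < Pbar r := by
  intro r hr
  have hm' : (2 : ℝ) ≤ m := by exact_mod_cast hm
  have hlog : log ((m : ℝ) - 1) - log m < 0 := sub_neg.2 (log_lt_log (by linarith) (by linarith))
  have hΔ_nonpos : Δ ≤ 0 := hΔ ▸ mul_nonpos_of_nonneg_of_nonpos hκ hlog.le
  have hrT : r ∈ Sa ∪ Sᶜ := mem_union_left _ hr
  have hle : ∀ x ∈ Sa ∪ Sᶜ, Ubar x ≤ U x - Δ := by
    intro x hx
    rcases mem_union.1 hx with hx | hx
    · exact (hUbar₁ x hx).le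
    · rw [hUbar₂ x hx]; linarith
  have hshift := prob_sub_const (Sa ∪ Sᶜ) U Δ r
  rw [hP r, hPbar r hrT, ← prob, ← prob]
  rcases hcase with hss | ⟨hκ_pos, x, hx⟩
  · obtain ⟨y, hyS, hySa⟩ := exists_of_ssubset hss
    have hyT : y ∉ Sa ∪ Sᶜ := by simp [hyS, hySa]
    calc prob univ U r < prob (Sa ∪ Sᶜ) U r :=
          prob_lt_of_ssubset U (ssubset_univ_iff.2 fun h => hyT (h ▸ mem_univ y)) hrT
      _ = prob (Sa ∪ Sᶜ) (fun x => U x - Δ) r := hshift.symm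
      _ ≤ prob (Sa ∪ Sᶜ) Ubar r := prob_le_of_le hrT hle (hUbar₁ r hr)
  · have hΔ_neg : Δ < 0 := hΔ ▸ mul_neg_of_pos_of_neg hκ_pos hlog
    calc prob univ U r ≤ prob (Sa ∪ Sᶜ) U r := prob_le_of_subset U (subset_univ _) hrT
      _ = prob (Sa ∪ Sᶜ) (fun x => U x - Δ) r := hshift.symm
      _ < prob (Sa ∪ Sᶜ) Ubar r :=
          prob_lt_of_le_of_lt hrT hle
            ⟨x, mem_union_right _ hx, by rw [hUbar₂ x hx]; linarith⟩ (hUbar₁ r hr)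

/-- In the edge-removal setup, if either `Sa ⊂ S`, or `κ > 0` and `Sᶜ` is
nonempty, then every surviving path `r ∈ Sa` through node `i` becomes
strictly more likely after the edge removal: `P̄_r > P_r`. -/
theorem surviving_paths_prob_increases
    {R : Type*} [Fintype R] [DecidableEq R]
    (U : R → ℝ) (S Sa : Finset R)
    (hS : S.Nonempty) (hSc : Sᶜ.Nonempty)
    (hSaS : Sa ⊆ S) (hSa : Sa.Nonempty)
    (m : ℕ) (hm : 2 ≤ m) (κ : ℝ) (hκ : 0 ≤ κ)
    (P : R → ℝ)
    (hP : ∀ r, P r = Real.exp (U r) / ∑ r' : R, Real.exp (U r'))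
    (Δ : ℝ) (hΔ : Δ = κ * (Real.log ((m : ℝ) - 1) - Real.log (m : ℝ)))
    (Ubar : R → ℝ)
    (hUbar₁ : ∀ r ∈ Sa, Ubar r = U r - Δ)
    (hUbar₂ : ∀ r ∈ Sᶜ, Ubar r = U r)
    (Pbar : R → ℝ)
    (hPbar : ∀ r ∈ Sa ∪ Sᶜ,
      Pbar r = Real.exp (Ubar r) / ∑ r' ∈ Sa ∪ Sᶜ, Real.exp (Ubar r'))
    (hcase : Sa ⊂ S ∨ (0 < κ ∧ Sᶜ.Nonempty)) :
    ∀ r ∈ Sa, P r < Pbar r :=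
  surviving_paths_prob_increases_general U S Sa m hm κ hκ P hP Δ hΔ Ubar hUbar₁ hUbar₂ Pbar hPbar
    hcase
end

section
/- In the welfare setup, suppose that for every path r ∈ R the total penalty weight is positive, ∑_{i∈N} γ_{r,i} > 0. If κ', κ : N → ℝ satisfy κ'_i > κ_i > 0 for every node i ∈ N, then W(κ') < W(κ). (Proposition 2(a): welfare is strictly decreasing in the choice aversion parameters.) -/
open Real Finset

/-
Raising every choice aversion parameter strictly raises the total penalty of each path, because
each path has a node of positive weight. Each exponent then strictly drops, and log-sum-exp is
strictly monotone in its arguments.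
-/

theorem Finset.sum_mul_lt_sum_mul_of_lt {ι : Type*} {s : Finset ι} {a b w : ι → ℝ}
    (hw : ∀ i ∈ s, 0 ≤ w i) (hw_pos : 0 < ∑ i ∈ s, w i) (hab : ∀ i ∈ s, a i < b i) :
    ∑ i ∈ s, a i * w i < ∑ i ∈ s, b i * w i := by
  obtain ⟨j, hj, hwj⟩ : ∃ j ∈ s, (0 : ℝ) < w j :=
    exists_lt_of_sum_lt (by rwa [sum_const_zero])
  exact sum_lt_sum (fun i hi => mul_le_mul_of_nonneg_right (hab i hi).le (hw i hi))
    ⟨j, hj, mul_lt_mul_of_pos_right (hab j hj) hwj⟩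

theorem Real.log_sum_exp_lt_log_sum_exp {ι : Type*} [Fintype ι] [Nonempty ι] {f g : ι → ℝ}
    (hfg : ∀ i, f i < g i) :
    log (∑ i, exp (f i)) < log (∑ i, exp (g i)) :=
  log_lt_log (sum_pos (fun i _ => exp_pos (f i)) univ_nonempty)
    (sum_lt_sum_of_nonempty univ_nonempty fun i _ => exp_lt_exp.2 (hfg i))

theorem welfare_strictly_decreasing_in_kappa_general
    {R N : Type*} [Fintype R] [Fintype N] [Nonempty R]
    (u : R → ℝ) (γ : R → N → ℝ)
    (hγ : ∀ r i, 0 ≤ γ r i)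
    (hpos : ∀ r, 0 < ∑ i : N, γ r i)
    (κ κ' : N → ℝ)
    (hκκ' : ∀ i, κ i < κ' i) :
    Real.log (∑ r : R, Real.exp (u r - ∑ i : N, κ' i * γ r i)) <
      Real.log (∑ r : R, Real.exp (u r - ∑ i : N, κ i * γ r i)) :=
  log_sum_exp_lt_log_sum_exp fun r => sub_lt_sub_left
    (sum_mul_lt_sum_mul_of_lt (fun i _ => hγ r i) (hpos r) fun i _ => hκκ' i) (u r)

/-- **Proposition 2(a)**: welfare `W(κ) = log ∑_r exp(u_r − ∑_i κ_i γ_{r,i})`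
is strictly decreasing in the choice aversion parameters, provided every path
carries a positive total penalty weight. -/
theorem welfare_strictly_decreasing_in_kappa
    {R N : Type*} [Fintype R] [Fintype N] [Nonempty R]
    (u : R → ℝ) (γ : R → N → ℝ)
    (hγ : ∀ r i, 0 ≤ γ r i)
    (hpos : ∀ r, 0 < ∑ i : N, γ r i)
    (κ κ' : N → ℝ)
    (hκ : ∀ i, 0 < κ i) (hκκ' : ∀ i, κ i < κ' i) :
    Real.log (∑ r : R, Real.exp (u r - ∑ i : N, κ' i * γ r i)) <
      Real.log (∑ r : R, Real.exp (u r - ∑ i : N, κ i * γ r i)) :=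
  welfare_strictly_decreasing_in_kappa_general u γ hγ hpos κ κ' hκκ'
end

section
/- In the welfare setup with γ_{r,i} = log(m_i)·1[r ∈ R_i], for every node i ∈ N and every κ : N → ℝ, the one-variable function t ↦ W(κ[i := t]) (welfare as a function of the choice aversion parameter at node i, all others fixed) is differentiable at t = κ_i with derivative dW/dκ_i = −(∑_{r∈R_i} P_r(κ))·log m_i, where P_r(κ) = exp(u_r − ∑_{j∈N} κ_j γ_{r,j})/∑_{r'∈R} exp(u_{r'} − ∑_{j∈N} κ_j γ_{r',j}). In particular this derivative is nonpositive, and strictly negative when m_i ≥ 2 and R_i is nonempty. (Proposition 2(c).) -/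
open Real Finset

/-!
Perturbing `κ_i` shifts each path's exponent affinely, by `-(t - κ_i) γ_{r,i}`, so the derivative
of the log-sum-exp welfare is the choice-probability average of `-γ_{r,i}`. Since `γ_{r,i}` is
`log m_i` on `R_i` and `0` elsewhere, that average is `-P(R_i) log m_i`; its sign follows from
`P > 0` and `log m_i ≥ 0`.
-/

noncomputable def softmax {R : Type*} [Fintype R] (a : R → ℝ) (r : R) : ℝ :=
  exp (a r) / ∑ r', exp (a r')

section Softmax

variable {R : Type*} [Fintype R]

theorem softmax_pos (a : R → ℝ) (r : R) : 0 < softmax a r :=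
  div_pos (exp_pos _) (sum_pos (fun _ _ => exp_pos _) ⟨r, mem_univ r⟩)

theorem hasDerivAt_log_sum_exp [Nonempty R] {f : R → ℝ → ℝ} {f' : R → ℝ} {x : ℝ}
    (hf : ∀ r, HasDerivAt (f r) (f' r) x) :
    HasDerivAt (fun t => log (∑ r, exp (f r t))) (∑ r, softmax (f · x) r * f' r) x := by
  have hpos : 0 < ∑ r, exp (f r x) := sum_pos (fun _ _ => exp_pos _) univ_nonempty
  convert (HasDerivAt.fun_sum fun r _ => (hf r).exp).log hpos.ne' using 1
  simp only [softmax, sum_div, div_mul_eq_mul_div]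

end Softmax

theorem hasDerivAt_sum_update_mul {𝕜 N : Type*} [NontriviallyNormedField 𝕜] [Fintype N]
    [DecidableEq N] (κ c : N → 𝕜) (i : N) (t : 𝕜) :
    HasDerivAt (fun t => ∑ j, Function.update κ i t j * c j) (c i) t := by
  have h j := (hasDerivAt_pi.1 (hasDerivAt_update κ i t) j).mul_const (c j)
  simpa [Pi.single_apply] using HasDerivAt.fun_sum (u := univ) fun j _ => h j

theorem welfare_deriv_in_kappa_general
    {R N : Type*} [Fintype R] [DecidableEq R] [Fintype N] [DecidableEq N] [Nonempty R]
    (u : R → ℝ) (Ri : N → Finset R) (m : N → ℕ)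
    (γ : R → N → ℝ)
    (hγ : ∀ r j, γ r j = if r ∈ Ri j then Real.log (m j) else 0)
    (i : N) (κ : N → ℝ) :
    HasDerivAt
      (fun t : ℝ =>
        Real.log (∑ r : R,
          Real.exp (u r - ∑ j : N, Function.update κ i t j * γ r j)))
      (-(∑ r ∈ Ri i,
          Real.exp (u r - ∑ j : N, κ j * γ r j) /
            ∑ r' : R, Real.exp (u r' - ∑ j : N, κ j * γ r' j)) *
        Real.log (m i))
      (κ i) ∧
    (-(∑ r ∈ Ri i,
          Real.exp (u r - ∑ j : N, κ j * γ r j) /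
            ∑ r' : R, Real.exp (u r' - ∑ j : N, κ j * γ r' j)) *
        Real.log (m i) ≤ 0) ∧
    (2 ≤ m i → (Ri i).Nonempty →
      -(∑ r ∈ Ri i,
          Real.exp (u r - ∑ j : N, κ j * γ r j) /
            ∑ r' : R, Real.exp (u r' - ∑ j : N, κ j * γ r' j)) *
        Real.log (m i) < 0) := by
  set P := softmax fun r => u r - ∑ j, κ j * γ r j
  have hderiv := hasDerivAt_log_sum_exp fun r =>
    (hasDerivAt_sum_update_mul κ (γ r) i (κ i)).const_sub (u r)
  simp only [Function.update_eq_self] at hderiv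
  have hweight : ∑ r, P r * -γ r i = -(∑ r ∈ Ri i, P r) * log (m i) := by
    simp only [hγ, mul_neg, mul_ite, mul_zero, sum_neg_distrib, sum_ite_mem, univ_inter, sum_mul,
      neg_mul]
  have hP_pos : ∀ r, 0 < P r := softmax_pos _
  refine ⟨hweight ▸ hderiv, ?_, fun hm hne => ?_⟩
  · rw [neg_mul, neg_nonpos]
    exact mul_nonneg (sum_nonneg fun r _ => (hP_pos r).le) (log_natCast_nonneg _)
  · rw [neg_mul, neg_lt_zero]
    exact mul_pos (sum_pos (fun r _ => hP_pos r) hne) (log_pos (by exact_mod_cast hm))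

/-- **Proposition 2(c)**: with `γ_{r,i} = log(m_i)·1[r ∈ R_i]`, welfare as a
function of the choice aversion parameter at node `i` is differentiable with
derivative `−(∑_{r∈R_i} P_r(κ))·log m_i`; this derivative is nonpositive, and
strictly negative when `m_i ≥ 2` and `R_i` is nonempty. -/
theorem welfare_deriv_in_kappa
    {R N : Type*} [Fintype R] [DecidableEq R] [Fintype N] [DecidableEq N] [Nonempty R]
    (u : R → ℝ) (Ri : N → Finset R) (m : N → ℕ) (hm : ∀ j, 1 ≤ m j)
    (γ : R → N → ℝ)
    (hγ : ∀ r j, γ r j = if r ∈ Ri j then Real.log (m j) else 0)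
    (i : N) (κ : N → ℝ) :
    HasDerivAt
      (fun t : ℝ =>
        Real.log (∑ r : R,
          Real.exp (u r - ∑ j : N, Function.update κ i t j * γ r j)))
      (-(∑ r ∈ Ri i,
          Real.exp (u r - ∑ j : N, κ j * γ r j) /
            ∑ r' : R, Real.exp (u r' - ∑ j : N, κ j * γ r' j)) *
        Real.log (m i))
      (κ i) ∧
    (-(∑ r ∈ Ri i,
          Real.exp (u r - ∑ j : N, κ j * γ r j) /
            ∑ r' : R, Real.exp (u r' - ∑ j : N, κ j * γ r' j)) *
        Real.log (m i) ≤ 0) ∧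
    (2 ≤ m i → (Ri i).Nonempty →
      -(∑ r ∈ Ri i,
          Real.exp (u r - ∑ j : N, κ j * γ r j) /
            ∑ r' : R, Real.exp (u r' - ∑ j : N, κ j * γ r' j)) *
        Real.log (m i) < 0) :=
  welfare_deriv_in_kappa_general u Ri m γ hγ i κ
end

section
/- In the node-level link-addition setup, welfare strictly increases upon adding the new edge a', i.e. W̃ > W, if and only if the logit probability of the new edge exceeds the threshold determined by the choice aversion parameter: P(a'|A_i^+∪{a'}) > 1 − (m/(m+1))^κ. (Proposition 3.) -/
open Real Finset

/-!
Welfare is `log (B · x + C)` with `x` the choice-aversion-discounted exponentiated value of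
node `i`, so it increases exactly when `x` does: when `S / m^κ < (S + e^{V'}) / (m+1)^κ`, with
`S = ∑ e^{V_a}`. Rearranged, this says that the share `S / (S + e^{V'})` of the old edges falls
below `(m/(m+1))^κ`, i.e. that the logit probability of the new edge exceeds `1 - (m/(m+1))^κ`.
-/

lemma log_mul_rpow_neg_add_lt_log_iff {B C S S' x y κ : ℝ} (hB : 0 < B) (hC : 0 ≤ C)
    (hS : 0 < S) (hS' : 0 < S') (hx : 0 < x) (hy : 0 < y) :
    log (B * S * x ^ (-κ) + C) < log (B * S' * y ^ (-κ) + C) ↔ S / x ^ κ < S' / y ^ κ := by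
  have hpos : ∀ {T z : ℝ}, 0 < T → 0 < z → 0 < B * T * z ^ (-κ) + C := fun hT hz => by
    have := rpow_pos_of_pos hz (-κ)
    positivity
  rw [log_lt_log_iff (hpos hS hx) (hpos hS' hy), add_lt_add_iff_right, rpow_neg hx.le,
    rpow_neg hy.le, mul_assoc, mul_assoc, mul_lt_mul_iff_right₀ hB, ← div_eq_mul_inv,
    ← div_eq_mul_inv]

lemma div_rpow_lt_div_rpow_iff {S S' x y κ : ℝ} (hS' : 0 < S') (hx : 0 < x) (hy : 0 < y) :
    S / x ^ κ < S' / y ^ κ ↔ S / S' < (x / y) ^ κ := by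
  rw [div_rpow hx.le hy.le, div_lt_div_iff₀ (rpow_pos_of_pos hx κ) (rpow_pos_of_pos hy κ),
    div_lt_div_iff₀ hS' (rpow_pos_of_pos hy κ), mul_comm S']

lemma one_sub_lt_div_add_iff {S E r : ℝ} (hSE : 0 < S + E) :
    1 - r < E / (S + E) ↔ S / (S + E) < r := by
  rw [sub_lt_comm, one_sub_div hSE.ne', add_sub_cancel_right]

theorem link_addition_welfare_iff_general
    {A : Type*} [Fintype A]
    (m : ℕ) (hm : 1 ≤ m) (hcard : Fintype.card A = m)
    (V : A → ℝ) (V' : ℝ) (κ : ℝ)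
    (B C : ℝ) (hB : 0 < B) (hC : 0 ≤ C)
    (W Wnew : ℝ)
    (hW : W = Real.log (B * (∑ a : A, Real.exp (V a)) * (m : ℝ) ^ (-κ) + C))
    (hWnew : Wnew = Real.log
      (B * ((∑ a : A, Real.exp (V a)) + Real.exp V') * ((m : ℝ) + 1) ^ (-κ) + C)) :
    Wnew > W ↔
      Real.exp V' / ((∑ a : A, Real.exp (V a)) + Real.exp V') >
        1 - ((m : ℝ) / ((m : ℝ) + 1)) ^ κ := by
  have : Nonempty A := Fintype.card_pos_iff.mp (hcard ▸ hm)
  have hS : 0 < ∑ a : A, exp (V a) := sum_pos (fun a _ => exp_pos _) univ_nonempty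
  have hSE : 0 < ∑ a : A, exp (V a) + exp V' := add_pos hS (exp_pos V')
  have hm₀ : (0 : ℝ) < m := by exact_mod_cast hm
  rw [hW, hWnew, gt_iff_lt, gt_iff_lt, one_sub_lt_div_add_iff hSE,
    log_mul_rpow_neg_add_lt_log_iff hB hC hS hSE hm₀ (by positivity),
    div_rpow_lt_div_rpow_iff hSE hm₀ (by positivity)]

/-- **Proposition 3**: in the node-level link-addition setup, adding the new
edge `a'` strictly increases welfare iff the logit probability of the new edge
exceeds `1 − (m/(m+1))^κ`. -/
theorem link_addition_welfare_iff
    {A : Type*} [Fintype A]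
    (m : ℕ) (hm : 1 ≤ m) (hcard : Fintype.card A = m)
    (V : A → ℝ) (V' : ℝ) (κ : ℝ) (hκ : 0 ≤ κ)
    (B C : ℝ) (hB : 0 < B) (hC : 0 ≤ C)
    (W Wnew : ℝ)
    (hW : W = Real.log (B * (∑ a : A, Real.exp (V a)) * (m : ℝ) ^ (-κ) + C))
    (hWnew : Wnew = Real.log
      (B * ((∑ a : A, Real.exp (V a)) + Real.exp V') * ((m : ℝ) + 1) ^ (-κ) + C)) :
    Wnew > W ↔
      Real.exp V' / ((∑ a : A, Real.exp (V a)) + Real.exp V') >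
        1 - ((m : ℝ) / ((m : ℝ) + 1)) ^ κ :=
  link_addition_welfare_iff_general m hm hcard V V' κ B C hB hC W Wnew hW hWnew
end

section
/- In the Braess choice-aversion example, for all u > 0, ε > 0 and κ ≥ 0: W̃ > W if and only if κ < log(1+e^ε)/log 2. Consequently, since log(1+e^ε)/log 2 > 1 for every ε > 0, adding the connecting edge strictly decreases welfare (W̃ < W, a Braess-type paradox without congestion) whenever κ > log(1+e^ε)/log 2. -/
open Real

/-
Factor out `exp (2u)`: both welfares are `2u + softplus t` for `softplus t = log (1 + exp t)`,
with `t = 0` before and `t = log (1 + exp ε) - κ log 2` after adding the edge. Since softplus is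
strictly increasing, the comparison of welfares is the sign of `log (1 + exp ε) - κ log 2`.
-/

noncomputable def softplus (t : ℝ) : ℝ := log (1 + exp t)

lemma softplus_zero : softplus 0 = log 2 := by
  norm_num [softplus]

lemma softplus_strictMono : StrictMono softplus := fun s t hst =>
  log_lt_log (by positivity) (by simpa using exp_lt_exp.mpr hst)

lemma log_exp_mul_one_add_exp (a t : ℝ) : log (exp a * (1 + exp t)) = a + softplus t := by
  rw [log_mul (exp_pos a).ne' (by positivity), log_exp, softplus]

lemma log_two_mul_exp (a : ℝ) : log (2 * exp a) = a + softplus 0 := by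
  rw [← log_exp_mul_one_add_exp, exp_zero, one_add_one_eq_two, mul_comm]

lemma log_exp_add_exp_sub_add_exp_add_sub (a b ε : ℝ) :
    log (exp a + exp (a - b) + exp (a + ε - b)) = a + softplus (softplus ε - b) := by
  have hsoftplus : exp (softplus ε) = 1 + exp ε := exp_log (by positivity)
  rw [← log_exp_mul_one_add_exp]
  congr 1
  simp only [exp_sub, exp_add, hsoftplus]
  ring

theorem braess_choice_aversion_general
    (u ε κ : ℝ) (hε : 0 < ε)
    (W Wnew : ℝ)
    (hW : W = Real.log (2 * Real.exp (2 * u)))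
    (hWnew : Wnew = Real.log
      (Real.exp (2 * u) + Real.exp (2 * u - κ * Real.log 2) +
        Real.exp (2 * u + ε - κ * Real.log 2))) :
    (Wnew > W ↔ κ < Real.log (1 + Real.exp ε) / Real.log 2) ∧
    (1 < Real.log (1 + Real.exp ε) / Real.log 2) ∧
    (κ > Real.log (1 + Real.exp ε) / Real.log 2 → Wnew < W) := by
  rw [log_two_mul_exp] at hW
  rw [log_exp_add_exp_sub_add_exp_add_sub] at hWnew
  have hlog2 : 0 < log 2 := log_pos one_lt_two
  subst hW hWnew
  refine ⟨?_, ?_, fun hκ_gt => ?_⟩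
  · rw [gt_iff_lt, add_lt_add_iff_left, softplus_strictMono.lt_iff_lt, sub_pos,
      lt_div_iff₀ hlog2, softplus]
  · rw [one_lt_div hlog2, ← softplus_zero]
    exact softplus_strictMono hε
  · rw [gt_iff_lt, div_lt_iff₀ hlog2, ← softplus] at hκ_gt
    rw [add_lt_add_iff_left, softplus_strictMono.lt_iff_lt, sub_neg]
    exact hκ_gt

/-- Braess's paradox from choice aversion (Figure 7): adding the connecting
edge improves welfare iff `κ < log(1+e^ε)/log 2`; this threshold exceeds `1`,
and welfare strictly decreases whenever `κ > log(1+e^ε)/log 2`. -/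
theorem braess_choice_aversion
    (u ε κ : ℝ) (hu : 0 < u) (hε : 0 < ε) (hκ : 0 ≤ κ)
    (W Wnew : ℝ)
    (hW : W = Real.log (2 * Real.exp (2 * u)))
    (hWnew : Wnew = Real.log
      (Real.exp (2 * u) + Real.exp (2 * u - κ * Real.log 2) +
        Real.exp (2 * u + ε - κ * Real.log 2))) :
    (Wnew > W ↔ κ < Real.log (1 + Real.exp ε) / Real.log 2) ∧
    (1 < Real.log (1 + Real.exp ε) / Real.log 2) ∧
    (κ > Real.log (1 + Real.exp ε) / Real.log 2 → Wnew < W) :=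
  braess_choice_aversion_general u ε κ hε W Wnew hW hWnew
end

section
/- In the parameterized Braess example, for every x ∈ ℝ and every κ ≥ 0: W_B > W_A (adding the free connecting edge is welfare-improving) if and only if κ < log(1 + e^{1−x})/log 2, equivalently κ < −log(e^{x−1}/(e^{x−1}+1))/log 2. In particular the threshold on κ is strictly decreasing in x. -/
open Real

/-! Factoring out the common path cost `e^{-(x+1)}`, the welfare after the addition is
`W_A + log ((2^{-κ} (1 + e^{1-x}) + 1) / 2)`, so `W_B > W_A` exactly when
`2^κ < 1 + e^{1-x}`. -/

lemma braess_path_weight_sum_eq (x s : ℝ) :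
    exp (-(x + 1) - s) + exp (-(x + 1)) + exp (-(2 * x) - s) =
      exp (-(x + 1)) * (1 + exp (-s) * (1 + exp (1 - x))) := by
  have hsplit : -(2 * x) - s = -(x + 1) + -s + (1 - x) := by ring
  rw [sub_eq_add_neg, hsplit, exp_add, exp_add, exp_add]
  ring

lemma one_lt_exp_neg_mul_iff {s y : ℝ} (hy : 0 < y) : 1 < exp (-s) * y ↔ s < log y := by
  conv_lhs => rw [← exp_log hy, ← exp_add, one_lt_exp_iff]
  rw [neg_add_eq_sub, sub_pos]

lemma log_two_mul_lt_log_mul_one_add_iff {E b : ℝ} (hE : 0 < E) (hb : 0 < b) :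
    log (2 * E) < log (E * (1 + b)) ↔ 1 < b := by
  rw [log_lt_log_iff (by positivity) (by positivity), mul_comm, mul_lt_mul_iff_of_pos_left hE]
  constructor <;> intro h <;> linarith

lemma log_one_add_exp_neg (t : ℝ) : log (1 + exp (-t)) = -log (exp t / (exp t + 1)) := by
  have hfactor : exp t + 1 = exp t * (1 + exp (-t)) := by
    rw [mul_add, mul_one, ← exp_add, add_neg_cancel, exp_zero]
  rw [hfactor, log_div (exp_ne_zero t) (by positivity), log_mul (exp_ne_zero t) (by positivity)]
  ring

lemma strictAnti_log_one_add_exp_sub (c : ℝ) : StrictAnti fun x : ℝ => log (1 + exp (c - x)) :=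
  fun _ _ hab => log_lt_log (by positivity) (by gcongr)

/-- Parameterized Braess example (Appendix C): adding the free connecting edge
is welfare-improving iff `κ < log(1+e^{1−x})/log 2`, equivalently
`κ < −log(e^{x−1}/(e^{x−1}+1))/log 2`; the threshold is strictly decreasing
in `x`. -/
theorem braess_parameterized :
    (∀ x κ : ℝ, 0 ≤ κ →
      ∀ WA WB : ℝ,
        WA = Real.log (2 * Real.exp (-(x + 1))) →
        WB = Real.log
          (Real.exp (-(x + 1) - κ * Real.log 2) + Real.exp (-(x + 1)) +
            Real.exp (-(2 * x) - κ * Real.log 2)) →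
        (WB > WA ↔ κ < Real.log (1 + Real.exp (1 - x)) / Real.log 2)) ∧
    (∀ x : ℝ,
      Real.log (1 + Real.exp (1 - x)) / Real.log 2 =
        -Real.log (Real.exp (x - 1) / (Real.exp (x - 1) + 1)) / Real.log 2) ∧
    StrictAnti (fun x : ℝ => Real.log (1 + Real.exp (1 - x)) / Real.log 2) := by
  have hlog2 : 0 < log 2 := log_pos one_lt_two
  refine ⟨fun x κ _ WA WB hWA hWB => ?_, fun x => ?_, fun a b hab => ?_⟩
  · have hy : 0 < 1 + exp (1 - x) := by positivity
    rw [hWA, hWB, braess_path_weight_sum_eq, gt_iff_lt,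
      log_two_mul_lt_log_mul_one_add_iff (exp_pos _) (by positivity), one_lt_exp_neg_mul_iff hy,
      lt_div_iff₀ hlog2]
  · rw [← neg_sub x 1, log_one_add_exp_neg]
  · exact div_lt_div_of_pos_right (strictAnti_log_one_add_exp_sub 1 hab) hlog2
end
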